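/- In the setting above, for each fixed μ ∈ (0,1] the function t ↦ φ(t,μ) = ψ(a - t,μ) + t - ψ(t - b,μ) is continuously differentiable with |∂φ/∂t (t,μ)| ≤ 1 for all t ∈ ℝ, hence φ(·,μ) is 1-Lipschitz. -/

import Mathlib

/-!
Each of `ψ` and its derivative is glued from polynomial pieces whose values and slopes agree at
the break points `0, μ, μ + √μ, μ + 2√μ`, so `ψ(·, μ)` is `C¹` with derivative in
`[0, 1 + √μ/2]`. Since `a < b`, at every `t` one of `a - t`, `t - b` is `≤ 0`, so at most one of
the two `ψ`-terms of `φ` has nonzero slope, and `φ' = 1 - ψ'(·)` lies in `[-√μ/2, 1] ⊆ [-1, 1]`.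
-/

/-- The piecewise smoothing function of `max{t,0}` from equation (3.8) of the paper. -/
noncomputable def psi (μ t : ℝ) : ℝ :=
  if t ≤ 0 then 0
  else if t ≤ μ then t ^ 2 / (2 * μ)
  else if t ≤ μ + Real.sqrt μ then (1 / 4) * (t - μ) ^ 2 + t - μ / 2
  else if t ≤ μ + 2 * Real.sqrt μ then -(1 / 4) * (t - μ - 2 * Real.sqrt μ) ^ 2 + t
  else t

open Set Filter

section Gluing

variable {E : Type*} [NormedAddCommGroup E] [NormedSpace ℝ E]

theorem hasDerivAt_ite_le {g h g' h' : ℝ → E} {c : ℝ}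
    (hg : ∀ x, HasDerivAt g (g' x) x) (hh : ∀ x, HasDerivAt h (h' x) x)
    (hc : g c = h c) (hc' : g' c = h' c) (x : ℝ) :
    HasDerivAt (fun t => if t ≤ c then g t else h t) (if x ≤ c then g' x else h' x) x := by
  set f : ℝ → E := fun t => if t ≤ c then g t else h t
  have hfg : EqOn f g (Iic c) := fun t ht => if_pos ht
  have hfh : EqOn f h (Ici c) := by
    intro t ht
    rcases (mem_Ici.1 ht).eq_or_lt with rfl | hlt
    · exact (if_pos le_rfl).trans hc
    · exact if_neg hlt.not_ge
  rcases lt_trichotomy x c with hx | rfl | hx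
  · rw [if_pos hx.le]
    exact (hg x).congr_of_eventuallyEq (eventuallyEq_of_mem (Iic_mem_nhds hx) hfg)
  · rw [if_pos le_rfl]
    have hl := ((hg x).hasDerivWithinAt (s := Iic x)).congr hfg (hfg (mem_Iic.2 le_rfl))
    have hr := ((hh x).hasDerivWithinAt (s := Ici x)).congr hfh (hfh (mem_Ici.2 le_rfl))
    rw [← hc'] at hr
    simpa only [Iic_union_Ici, hasDerivWithinAt_univ] using hl.union hr
  · rw [if_neg hx.not_ge]
    exact (hh x).congr_of_eventuallyEq
      (eventuallyEq_of_mem (Ioi_mem_nhds hx) fun t ht => if_neg (not_le.2 ht))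

end Gluing

noncomputable def psiDeriv (μ t : ℝ) : ℝ :=
  if t ≤ 0 then 0
  else if t ≤ μ then t / μ
  else if t ≤ μ + Real.sqrt μ then (t - μ) / 2 + 1
  else if t ≤ μ + 2 * Real.sqrt μ then -(t - μ - 2 * Real.sqrt μ) / 2 + 1
  else 1

section Psi

variable {μ : ℝ}

theorem hasDerivAt_psi (hμ : 0 < μ) (x : ℝ) : HasDerivAt (psi μ) (psiDeriv μ x) x := by
  have hsq : Real.sqrt μ ^ 2 = μ := Real.sq_sqrt hμ.le
  have h₁ : μ ≤ μ + Real.sqrt μ := le_add_of_nonneg_right (Real.sqrt_nonneg μ)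
  have h₂ : μ + Real.sqrt μ ≤ μ + 2 * Real.sqrt μ := by linarith [Real.sqrt_nonneg μ]
  have d₃ := hasDerivAt_ite_le (c := μ + 2 * Real.sqrt μ)
    (g := fun t => -(1 / 4) * (t - μ - 2 * Real.sqrt μ) ^ 2 + t)
    (g' := fun t => -(t - μ - 2 * Real.sqrt μ) / 2 + 1) (h := fun t => t) (h' := fun _ => 1)
    (fun x => (((((hasDerivAt_id x).sub_const μ).sub_const (2 * Real.sqrt μ)).pow 2).const_mul
      (-(1 / 4) : ℝ) |>.add (hasDerivAt_id x)).congr_deriv (by simp only [id]; ring))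
    hasDerivAt_id (by ring) (by ring)
  have d₂ := hasDerivAt_ite_le (c := μ + Real.sqrt μ)
    (g := fun t => (1 / 4) * (t - μ) ^ 2 + t - μ / 2) (g' := fun t => (t - μ) / 2 + 1)
    (fun x => ((((hasDerivAt_id x).sub_const μ).pow 2).const_mul (1 / 4 : ℝ)
      |>.add (hasDerivAt_id x) |>.sub_const (μ / 2)).congr_deriv (by simp only [id]; ring))
    d₃ (by rw [if_pos h₂]; linear_combination hsq / 2) (by rw [if_pos h₂]; ring)
  have d₁ := hasDerivAt_ite_le (c := μ) (g := fun t => t ^ 2 / (2 * μ)) (g' := fun t => t / μ)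
    (fun x => ((hasDerivAt_pow 2 x).div_const (2 * μ)).congr_deriv (by field_simp; ring))
    d₂ (by rw [if_pos h₁]; field_simp; ring) (by rw [if_pos h₁]; field_simp; ring)
  exact hasDerivAt_ite_le (fun _ => hasDerivAt_const _ 0) d₁
    (by rw [if_pos hμ.le]; ring) (by rw [if_pos hμ.le]; ring) x

theorem continuous_psiDeriv (hμ : 0 < μ) : Continuous (psiDeriv μ) := by
  have h₁ : μ ≤ μ + Real.sqrt μ := le_add_of_nonneg_right (Real.sqrt_nonneg μ)
  have h₂ : μ + Real.sqrt μ ≤ μ + 2 * Real.sqrt μ := by linarith [Real.sqrt_nonneg μ]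
  have c₃ : Continuous fun t : ℝ =>
      if t ≤ μ + 2 * Real.sqrt μ then -(t - μ - 2 * Real.sqrt μ) / 2 + 1 else 1 :=
    Continuous.if_le (by fun_prop) continuous_const continuous_id continuous_const
      (by rintro x rfl; ring)
  have c₂ : Continuous fun t : ℝ => if t ≤ μ + Real.sqrt μ then (t - μ) / 2 + 1 else
      if t ≤ μ + 2 * Real.sqrt μ then -(t - μ - 2 * Real.sqrt μ) / 2 + 1 else 1 :=
    Continuous.if_le (by fun_prop) c₃ continuous_id continuous_const
      (by rintro x rfl; rw [if_pos h₂]; ring)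
  have c₁ : Continuous fun t : ℝ => if t ≤ μ then t / μ else if t ≤ μ + Real.sqrt μ then
      (t - μ) / 2 + 1 else if t ≤ μ + 2 * Real.sqrt μ then -(t - μ - 2 * Real.sqrt μ) / 2 + 1
      else 1 :=
    Continuous.if_le (by fun_prop) c₂ continuous_id continuous_const
      (by rintro x rfl; rw [if_pos h₁, div_self hμ.ne']; ring)
  exact Continuous.if_le continuous_const c₁ continuous_id continuous_const
    (by rintro x rfl; rw [if_pos hμ.le]; ring)

theorem psiDeriv_of_nonpos {t : ℝ} (ht : t ≤ 0) : psiDeriv μ t = 0 := if_pos ht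

theorem psiDeriv_nonneg (t : ℝ) : 0 ≤ psiDeriv μ t := by
  unfold psiDeriv
  split_ifs with h₀ h₁ h₂ h₃
  · exact le_rfl
  · exact div_nonneg (not_le.1 h₀).le ((not_le.1 h₀).le.trans h₁)
  all_goals linarith

theorem psiDeriv_le (t : ℝ) : psiDeriv μ t ≤ 1 + Real.sqrt μ / 2 := by
  have hs := Real.sqrt_nonneg μ
  unfold psiDeriv
  split_ifs with h₀ h₁ h₂ h₃
  · positivity
  · linarith [div_le_one_of_le₀ h₁ ((not_le.1 h₀).le.trans h₁)]
  all_goals linarith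

theorem hasDerivAt_psi_sub_add_sub_psi (hμ : 0 < μ) (a b x : ℝ) :
    HasDerivAt (fun t => psi μ (a - t) + t - psi μ (t - b))
      (1 - psiDeriv μ (a - x) - psiDeriv μ (x - b)) x := by
  have hl := (hasDerivAt_psi hμ (a - x)).comp x ((hasDerivAt_id x).const_sub a)
  have hr := (hasDerivAt_psi hμ (x - b)).comp x ((hasDerivAt_id x).sub_const b)
  exact ((hl.add (hasDerivAt_id x)).sub hr).congr_deriv (by ring)

theorem abs_one_sub_psiDeriv_sub_psiDeriv_le {a b : ℝ} (hab : a ≤ b) (hμ : μ ≤ 1) (t : ℝ) :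
    |1 - psiDeriv μ (a - t) - psiDeriv μ (t - b)| ≤ 1 := by
  have hs : Real.sqrt μ ≤ 1 := Real.sqrt_le_one.2 hμ
  have hl := psiDeriv_nonneg (μ := μ) (a - t)
  have hr := psiDeriv_nonneg (μ := μ) (t - b)
  have hl' := psiDeriv_le (μ := μ) (a - t)
  have hr' := psiDeriv_le (μ := μ) (t - b)
  rw [abs_le]
  rcases le_total (a - t) 0 with ht | ht
  · rw [psiDeriv_of_nonpos ht]; constructor <;> linarith
  · rw [psiDeriv_of_nonpos (by linarith : t - b ≤ 0)]; constructor <;> linarith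

end Psi

/-- for fixed ,  is
continuously differentiable with , hence -Lipschitz. -/
theorem stmt14 (a b : ℝ) (hab : a < b) (μ : ℝ) (hμ : μ ∈ Set.Ioc (0 : ℝ) 1) :
    let φ : ℝ → ℝ := fun t => psi μ (a - t) + t - psi μ (t - b)
    ContDiff ℝ 1 φ ∧ (∀ t : ℝ, |deriv φ t| ≤ 1) ∧ LipschitzWith 1 φ := by
  intro φ
  have hφ := hasDerivAt_psi_sub_add_sub_psi hμ.1 a b
  have hdiff : Differentiable ℝ φ := fun x => (hφ x).differentiableAt
  have hderiv : deriv φ = fun x => 1 - psiDeriv μ (a - x) - psiDeriv μ (x - b) :=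
    funext fun x => (hφ x).deriv
  have hbound : ∀ t, |deriv φ t| ≤ 1 := by
    rw [hderiv]
    exact abs_one_sub_psiDeriv_sub_psiDeriv_le hab.le hμ.2
  refine ⟨contDiff_one_iff_deriv.2 ⟨hdiff, ?_⟩, hbound, ?_⟩
  · have := continuous_psiDeriv hμ.1
    rw [hderiv]
    fun_prop
  · refine lipschitzWith_of_nnnorm_deriv_le hdiff fun t => ?_
    simpa [← NNReal.coe_le_coe] using hbound t
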